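/- arXiv:2407.21775 — 7 statements merged into one kernel-verified Lean document; each statement's English description precedes it below -/
import Mathlib

section
/- Let H be a Hermitian N×N complex matrix and O_1,…,O_M be N×N complex matrices satisfying the invariance property [H,O_m] = -∑_{m'=1}^M h_{mm'} O_{m'} for all m ∈ {1,…,M}. Let ρ be any N×N complex matrix and define ρ(t) := exp(-itH) ρ exp(itH) and v_m(t) := trace(ρ(t) O_m). Then for every t ∈ ℝ and every m, the function t ↦ v_m(t) is differentiable at t with derivative v_m'(t) = -i ∑_{m'=1}^M h_{mm'} v_{m'}(t). (Theorem 2.3: the vector of expectations satisfies the shadow Schrödinger equation d/dt v(t) = -i H_S v(t).) -/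
open Matrix NormedSpace

/-! With `A = -iH`, the state is the conjugation `ρ(t) = exp(tA) ρ exp(-tA)`, whose derivative
is the commutator `[A, ρ(t)]`. Cyclicity of the trace moves the commutator onto the observable,
`tr([A, ρ] O) = tr(ρ [O, A])`, and the invariance property expresses `[O_m, H]` as a linear
combination of the `O_{m'}`. -/

section ExpConjugation

variable {𝕂 𝔸 : Type*} [RCLike 𝕂] [NormedRing 𝔸] [NormedAlgebra 𝕂 𝔸] [CompleteSpace 𝔸]

theorem hasDerivAt_exp_smul_mul_mul_exp_smul_neg (A ρ : 𝔸) (t : 𝕂) :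
    HasDerivAt (fun s : 𝕂 => exp (s • A) * ρ * exp (s • -A))
      ⁅A, exp (t • A) * ρ * exp (t • -A)⁆ t := by
  refine (((hasDerivAt_exp_smul_const' A t).mul_const ρ).mul
    (hasDerivAt_exp_smul_const (-A) t)).congr_deriv ?_
  rw [Ring.lie_def]
  noncomm_ring

end ExpConjugation

namespace Matrix

variable {n : Type*} [Fintype n]

theorem trace_lie_mul {R : Type*} [CommRing R] (A B C : Matrix n n R) :
    trace (⁅A, B⁆ * C) = trace (B * ⁅C, A⁆) := by
  simp only [Ring.lie_def, sub_mul, mul_sub, trace_sub, mul_assoc, trace_mul_comm A (B * C)]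

open scoped Norms.Operator in
theorem _root_.HasDerivAt.matrix_trace {𝕜 α : Type*} [NontriviallyNormedField 𝕜]
    [NormedAddCommGroup α] [NormedSpace 𝕜 α] {f : 𝕜 → Matrix n n α} {f' : Matrix n n α}
    {t : 𝕜} (hf : HasDerivAt f f' t) :
    HasDerivAt (fun s => (f s).trace) f'.trace t :=
  let traceCLM : Matrix n n α →L[𝕜] α :=
    { toLinearMap := traceLinearMap n 𝕜 α, cont := continuous_id.matrix_trace }
  traceCLM.hasFDerivAt.comp_hasDerivAt t hf

end Matrix

theorem shadow_schrodinger_equation_general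
    {N M : ℕ}
    (H : Matrix (Fin N) (Fin N) ℂ)
    (O : Fin M → Matrix (Fin N) (Fin N) ℂ)
    (h : Fin M → Fin M → ℂ)
    (hinv : ∀ m, H * O m - O m * H = -∑ m', h m m' • O m')
    (ρ : Matrix (Fin N) (Fin N) ℂ)
    (ρt : ℝ → Matrix (Fin N) (Fin N) ℂ)
    (hρt : ∀ t : ℝ, ρt t =
      exp ((-(Complex.I * t)) • H) * ρ * exp ((Complex.I * t) • H))
    (v : Fin M → ℝ → ℂ)
    (hv : ∀ m t, v m t = (ρt t * O m).trace) :
    ∀ (t : ℝ) (m : Fin M),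
      HasDerivAt (fun s : ℝ => v m s)
        (-Complex.I * ∑ m', h m m' * v m' t) t := by
  intro t m
  set A := -Complex.I • H with hA
  have hρA : ρt = fun s : ℝ => exp (s • A) * ρ * exp (s • -A) := by
    funext s
    rw [hρt, ← Complex.coe_smul, ← Complex.coe_smul, smul_neg, smul_smul, ← neg_smul]
    congr 4 <;> ring
  have hρO : HasDerivAt (fun s => ρt s * O m) (⁅A, ρt t⁆ * O m) t := by
    subst hρA
    open scoped Matrix.Norms.Operator in
    exact (hasDerivAt_exp_smul_mul_mul_exp_smul_neg A ρ t).mul_const (O m)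
  have hcomm : ⁅O m, A⁆ = -Complex.I • ∑ m', h m m' • O m' := by
    rw [← neg_neg (∑ m', h m m' • O m'), ← hinv m, neg_sub, hA, Ring.lie_def, mul_smul_comm,
      smul_mul_assoc, smul_sub]
  rw [show (fun s => v m s) = fun s => (ρt s * O m).trace from funext (hv m)]
  refine hρO.matrix_trace.congr_deriv ?_
  rw [trace_lie_mul, hcomm]
  simp only [Matrix.mul_smul, Matrix.mul_sum, trace_smul, trace_sum, hv, smul_eq_mul]

/-- **Theorem 2.3 (shadow Schrödinger equation).** If a Hermitian Hamiltonian `H` and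
operators `O_1, …, O_M` satisfy the invariance property
`[H, O m] = -∑ m', h m m' • O m'`, then the expectations
`v m t = trace(ρ(t) * O m)` with `ρ(t) = exp(-itH) ρ exp(itH)` satisfy
`d/dt v m t = -i ∑ m', h m m' * v m' t`. -/
theorem shadow_schrodinger_equation
    {N M : ℕ} (hN : 0 < N) (hM : 0 < M)
    (H : Matrix (Fin N) (Fin N) ℂ) (hH : H.IsHermitian)
    (O : Fin M → Matrix (Fin N) (Fin N) ℂ)
    (h : Fin M → Fin M → ℂ)
    (hinv : ∀ m, H * O m - O m * H = -∑ m', h m m' • O m')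
    (ρ : Matrix (Fin N) (Fin N) ℂ)
    (ρt : ℝ → Matrix (Fin N) (Fin N) ℂ)
    (hρt : ∀ t : ℝ, ρt t =
      exp ((-(Complex.I * t)) • H) * ρ * exp ((Complex.I * t) • H))
    (v : Fin M → ℝ → ℂ)
    (hv : ∀ m t, v m t = (ρt t * O m).trace) :
    ∀ (t : ℝ) (m : Fin M),
      HasDerivAt (fun s : ℝ => v m s)
        (-Complex.I * ∑ m', h m m' * v m' t) t :=
  shadow_schrodinger_equation_general H O h hinv ρ ρt hρt v hv
end

section
/- Let H be a Hermitian N×N complex matrix and O_1,…,O_M be N×N complex matrices satisfying the invariance property [H,O_m] = -∑_{m'=1}^M h_{mm'} O_{m'} for all m, with H_S the M×M matrix of coefficients h_{mm'}. Let ρ be any N×N complex matrix, ρ(t) := exp(-itH) ρ exp(itH), and v_m(t) := trace(ρ(t) O_m). Then for all t ∈ ℝ, the expectation vector is given by the matrix exponential of the shadow Hamiltonian: v_m(t) = ∑_{m'=1}^M (exp(-it H_S))_{mm'} v_{m'}(0) for every m. -/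
/-!
Differentiating `ρ(t)` gives `ρ' = -i [H, ρ]`, so by cyclicity of the trace and the invariance
property `v_m' = -i ∑ h_{mm'} v_{m'}`: the expectation vector solves the linear ODE
`v' = -i H_S v`. Its solution is `exp (-i t H_S) v(0)`, because `exp (i t H_S) v(t)` has zero
derivative.
-/

open Matrix NormedSpace

theorem hasDerivAt_exp_smul_mul_mul_exp_smul_neg_s1 {𝕂 𝔸 : Type*} [RCLike 𝕂] [NormedRing 𝔸]
    [NormedAlgebra 𝕂 𝔸] [CompleteSpace 𝔸] (a x : 𝔸) (t : 𝕂) :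
    HasDerivAt (fun s : 𝕂 => exp (s • a) * x * exp (s • -a))
      (a * (exp (t • a) * x * exp (t • -a)) - exp (t • a) * x * exp (t • -a) * a) t := by
  refine (((hasDerivAt_exp_smul_const' a t).mul_const x).mul
    (hasDerivAt_exp_smul_const (-a) t)).congr_deriv ?_
  noncomm_ring

theorem HasDerivAt.linearMap_comp {𝕜 E F : Type*} [NontriviallyNormedField 𝕜] [CompleteSpace 𝕜]
    [NormedAddCommGroup E] [NormedSpace 𝕜 E] [FiniteDimensional 𝕜 E]
    [NormedAddCommGroup F] [NormedSpace 𝕜 F] (L : E →ₗ[𝕜] F) {f : 𝕜 → E} {f' : E} {x : 𝕜}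
    (hf : HasDerivAt f f' x) : HasDerivAt (fun s => L (f s)) (L f') x :=
  L.toContinuousLinearMap.hasFDerivAt.comp_hasDerivAt x hf

theorem Matrix.trace_commutator_mul {n R : Type*} [Fintype n] [CommRing R]
    (a b c : Matrix n n R) : ((a * b - b * a) * c).trace = -(b * (a * c - c * a)).trace := by
  simp only [sub_mul, mul_sub, trace_sub, mul_assoc]
  rw [trace_mul_comm a, mul_assoc]
  ring

section

attribute [local instance] Matrix.linftyOpNormedRing Matrix.linftyOpNormedAlgebra

theorem Matrix.eq_exp_smul_mulVec_of_hasDerivAt {m 𝕂 : Type*} [Fintype m] [DecidableEq m]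
    [RCLike 𝕂] (A : Matrix m m 𝕂) (u : m → ℝ → 𝕂)
    (hu : ∀ i s, HasDerivAt (u i) ((A *ᵥ fun j => u j s) i) s) (t : ℝ) (i : m) :
    u i t = (exp (t • A) *ᵥ fun j => u j 0) i := by
  set E : ℝ → Matrix m m 𝕂 := fun s => exp (s • -A)
  have hE : ∀ s, HasDerivAt E (-A * E s) s := hasDerivAt_exp_smul_const' (-A)
  have hcomm : ∀ s, Commute A (E s) := fun s =>
    ((Commute.refl A).neg_right.smul_right s).exp_right
  have hconst : (E t *ᵥ fun j => u j t) = fun k => u k 0 := by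
    funext k
    have hderiv : ∀ s, HasDerivAt (fun s => (E s *ᵥ fun j => u j s) k) 0 s := by
      intro s
      refine (HasDerivAt.fun_sum (u := Finset.univ) fun j _ =>
        ((hE s).linearMap_comp (entryLinearMap ℝ 𝕂 k j)).mul (hu j s)).congr_deriv ?_
      have hzero : ((-A * E s) *ᵥ fun j => u j s) k + (E s *ᵥ A *ᵥ fun j => u j s) k = 0 := by
        rw [mulVec_mulVec, ← Pi.add_apply, ← add_mulVec, ← (hcomm s).eq, neg_mul,
          neg_add_cancel, zero_mulVec, Pi.zero_apply]
      simpa [mulVec, dotProduct, Finset.sum_add_distrib] using hzero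
    simpa [E] using is_const_of_deriv_eq_zero (fun s => (hderiv s).differentiableAt)
      (fun s => (hderiv s).deriv) t 0
  have hexp_mul : exp (t • A) * E t = 1 := by
    rw [← exp_add_of_commute, smul_neg, add_neg_cancel, exp_zero]
    exact ((Commute.refl A).smul_left t).neg_right.smul_right t
  rw [← hconst, mulVec_mulVec, hexp_mul, one_mulVec]

theorem shadow_state_matrix_exponential_general
    {N M : ℕ}
    (H : Matrix (Fin N) (Fin N) ℂ)
    (O : Fin M → Matrix (Fin N) (Fin N) ℂ)
    (h : Fin M → Fin M → ℂ)
    (hinv : ∀ m, H * O m - O m * H = -∑ m', h m m' • O m')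
    (HS : Matrix (Fin M) (Fin M) ℂ) (hHS : ∀ m m', HS m m' = h m m')
    (ρ : Matrix (Fin N) (Fin N) ℂ)
    (ρt : ℝ → Matrix (Fin N) (Fin N) ℂ)
    (hρt : ∀ t : ℝ, ρt t =
      exp ((-(Complex.I * t)) • H) * ρ * exp ((Complex.I * t) • H))
    (v : Fin M → ℝ → ℂ)
    (hv : ∀ m t, v m t = (ρt t * O m).trace) :
    ∀ (t : ℝ) (m : Fin M),
      v m t = ∑ m', (exp ((-(Complex.I * t)) • HS)) m m' * v m' 0 := by
  have hsmul {n : ℕ} (c : ℂ) (X : Matrix (Fin n) (Fin n) ℂ) (t : ℝ) :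
      t • c • X = (c * t) • X := by
    rw [← Complex.coe_smul, smul_smul, mul_comm]
  have hρ' (s : ℝ) : HasDerivAt ρt ((-Complex.I) • (H * ρt s - ρt s * H)) s := by
    have hρt' : (fun s : ℝ => exp (s • (-Complex.I) • H) * ρ * exp (s • -((-Complex.I) • H)))
        = ρt := by
      funext s
      rw [hρt, ← neg_smul, hsmul, hsmul, neg_mul, neg_neg]
    subst hρt'
    refine (hasDerivAt_exp_smul_mul_mul_exp_smul_neg_s1 ((-Complex.I) • H) ρ s).congr_deriv ?_
    rw [smul_sub, smul_mul_assoc, mul_smul_comm]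
    rfl
  have hv' (m : Fin M) (s : ℝ) :
      HasDerivAt (v m) ((((-Complex.I) • HS) *ᵥ fun m' => v m' s) m) s := by
    rw [show v m = fun s => (ρt s * O m).trace from funext (hv m)]
    refine ((hρ' s).mul_const (O m)).linearMap_comp (traceLinearMap (Fin N) ℝ ℂ)
      |>.congr_deriv ?_
    simp [trace_commutator_mul, hinv, mulVec, dotProduct, hHS, hv, trace_sum, Finset.mul_sum,
      mul_assoc]
  intro t m
  rw [eq_exp_smul_mulVec_of_hasDerivAt _ _ hv' t m, hsmul, neg_mul]
  rfl

/-- The expectation vector evolves by the matrix exponential of the shadow Hamiltonian: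
`v m t = ∑ m', (exp (-it H_S)) m m' * v m' 0`. -/
theorem shadow_state_matrix_exponential
    {N M : ℕ} (hN : 0 < N) (hM : 0 < M)
    (H : Matrix (Fin N) (Fin N) ℂ) (hH : H.IsHermitian)
    (O : Fin M → Matrix (Fin N) (Fin N) ℂ)
    (h : Fin M → Fin M → ℂ)
    (hinv : ∀ m, H * O m - O m * H = -∑ m', h m m' • O m')
    (HS : Matrix (Fin M) (Fin M) ℂ) (hHS : ∀ m m', HS m m' = h m m')
    (ρ : Matrix (Fin N) (Fin N) ℂ)
    (ρt : ℝ → Matrix (Fin N) (Fin N) ℂ)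
    (hρt : ∀ t : ℝ, ρt t =
      exp ((-(Complex.I * t)) • H) * ρ * exp ((Complex.I * t) • H))
    (v : Fin M → ℝ → ℂ)
    (hv : ∀ m t, v m t = (ρt t * O m).trace) :
    ∀ (t : ℝ) (m : Fin M),
      v m t = ∑ m', (exp ((-(Complex.I * t)) • HS)) m m' * v m' 0 :=
  shadow_state_matrix_exponential_general H O h hinv HS hHS ρ ρt hρt v hv

end
end

section
/- Let H be a Hermitian N×N complex matrix and O_1,…,O_M be N×N complex matrices satisfying the invariance property [H,O_m] = -∑_{m'=1}^M h_{mm'} O_{m'} for all m. If the operators O_m are orthogonal, i.e. trace(O_mᴴ O_{m'}) = λ δ_{mm'} for some real λ > 0 and all m, m', then the M×M matrix H_S with entries h_{mm'} is Hermitian: h_{mm'} = conj(h_{m'm}) for all m, m'. (Lemma 2.4.) -/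
/-!
Pairing the invariance relation with `O m'` in the trace inner product `⟪B, A⟫ = trace (Bᴴ * A)`
and using orthogonality gives `⟪O m', [H, O m]⟫ = -λ h m m'`. For Hermitian `H` the map
`A ↦ [H, A]` is self-adjoint for this inner product, so the left side is conjugate-symmetric
in `(m, m')`; dividing by the real `λ ≠ 0` gives `h m m' = conj (h m' m)`.
-/

open Matrix

namespace Matrix

variable {n ι R : Type*} [Fintype n] [CommRing R] [StarRing R]

theorem trace_conjTranspose_mul_commutator_eq_star {H : Matrix n n R} (hH : H.IsHermitian)
    (A B : Matrix n n R) :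
    (Bᴴ * (H * A - A * H)).trace = star (Aᴴ * (H * B - B * H)).trace := by
  rw [← trace_conjTranspose, conjTranspose_mul, conjTranspose_sub, conjTranspose_mul,
    conjTranspose_mul, conjTranspose_conjTranspose, hH.eq, sub_mul, mul_sub, trace_sub,
    trace_sub, Matrix.mul_assoc, Matrix.mul_assoc, trace_mul_comm H, Matrix.mul_assoc]

theorem trace_conjTranspose_mul_sum_smul_of_orthogonal [Fintype ι] [DecidableEq ι]
    {O : ι → Matrix n n R} {c : R} (horth : ∀ i j, ((O i)ᴴ * O j).trace = if i = j then c else 0)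
    (x : ι → R) (j : ι) :
    ((O j)ᴴ * ∑ i, x i • O i).trace = x j * c := by
  simp only [Matrix.mul_sum, Matrix.mul_smul, trace_sum, trace_smul, horth, smul_eq_mul,
    mul_ite, mul_zero, Finset.sum_ite_eq, Finset.mem_univ, if_true]

end Matrix

theorem shadow_hamiltonian_hermitian_of_orthogonal_general
    {N M : ℕ}
    (H : Matrix (Fin N) (Fin N) ℂ) (hH : H.IsHermitian)
    (O : Fin M → Matrix (Fin N) (Fin N) ℂ)
    (h : Fin M → Fin M → ℂ)
    (hinv : ∀ m, H * O m - O m * H = -∑ m', h m m' • O m')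
    (lam : ℝ) (hlam : 0 < lam)
    (horth : ∀ m m', ((O m)ᴴ * O m').trace = if m = m' then (lam : ℂ) else 0) :
    ∀ m m', h m m' = starRingEnd ℂ (h m' m) := by
  have hcoeff : ∀ m m', ((O m')ᴴ * (H * O m - O m * H)).trace = -(h m m' * lam) := fun m m' => by
    rw [hinv, Matrix.mul_neg, trace_neg, trace_conjTranspose_mul_sum_smul_of_orthogonal horth]
  intro m m'
  have hself := trace_conjTranspose_mul_commutator_eq_star hH (O m) (O m')
  rw [hcoeff, hcoeff, star_neg, star_mul', Complex.star_def, Complex.conj_ofReal, neg_inj] at hself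
  exact mul_right_cancel₀ (Complex.ofReal_ne_zero.mpr hlam.ne') hself

/-- **Lemma 2.4.** If the operators `O m` are orthogonal with respect to the trace inner
product, then the shadow Hamiltonian matrix `H_S` (with entries `h m m'`) is Hermitian. -/
theorem shadow_hamiltonian_hermitian_of_orthogonal
    {N M : ℕ} (hN : 0 < N) (hM : 0 < M)
    (H : Matrix (Fin N) (Fin N) ℂ) (hH : H.IsHermitian)
    (O : Fin M → Matrix (Fin N) (Fin N) ℂ)
    (h : Fin M → Fin M → ℂ)
    (hinv : ∀ m, H * O m - O m * H = -∑ m', h m m' • O m')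
    (lam : ℝ) (hlam : 0 < lam)
    (horth : ∀ m m', ((O m)ᴴ * O m').trace = if m = m' then (lam : ℂ) else 0) :
    ∀ m m', h m m' = starRingEnd ℂ (h m' m) :=
  shadow_hamiltonian_hermitian_of_orthogonal_general H hH O h hinv lam hlam horth
end

section
/- Let H be a Hermitian N×N complex matrix and O_1,…,O_M be N×N complex matrices satisfying the invariance property [H,O_m] = -∑_{m'=1}^M h_{mm'} O_{m'} for all m, and assume the M×M matrix H_S with entries h_{mm'} is Hermitian. Let ρ be any N×N complex matrix, ρ(t) := exp(-itH) ρ exp(itH), and v_m(t) := trace(ρ(t) O_m). Then the squared norm of the expectation vector is conserved: ∑_{m=1}^M |v_m(t)|² = ∑_{m=1}^M |v_m(0)|² for all t ∈ ℝ. (Hence the normalization constant A of the shadow state is constant in time.) -/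
/-!
In the Heisenberg picture the observables evolve as `O_m(t) = exp(itH) O_m exp(-itH)`, and the
invariance property says that `[H, ·]` acts on the span of the `O_m` through the matrix `H_S`.
Hence `O_m(t) = ∑_{m'} exp(-itH_S)_{mm'} O_{m'}`: for any linear `ψ` intertwining right
multiplication by `c` with a commutator `[·, a]`, the conjugate `exp(s a) ψ(exp(s c)) exp(-s a)`
has zero derivative. So `v(t) = exp(-itH_S) v(0)`, and `exp(-itH_S)` is unitary because `H_S` is
Hermitian.
-/

open Matrix NormedSpace

section ExpConjugation

variable {𝕂 𝔸 𝔹 : Type*} [RCLike 𝕂] [NormedRing 𝔸] [NormedAlgebra 𝕂 𝔸] [CompleteSpace 𝔸]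
  [NormedRing 𝔹] [NormedAlgebra 𝕂 𝔹] [CompleteSpace 𝔹]

theorem exp_smul_mul_exp_smul_neg (x : 𝔸) (t : 𝕂) : exp (t • x) * exp (t • -x) = 1 := by
  let +nondep : NormedAlgebra ℚ 𝔸 := .restrictScalars ℚ 𝕂 𝔸
  rw [smul_neg, ← NormedSpace.exp_add_of_commute (Commute.refl _).neg_right, add_neg_cancel,
    exp_zero]

theorem ContinuousLinearMap.exp_smul_conj_map_exp_smul {a : 𝔸} {c : 𝔹} (ψ : 𝔹 →L[𝕂] 𝔸)
    (hψ : ∀ X, ψ (X * c) = ψ X * a - a * ψ X) (t : 𝕂) :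
    exp (t • a) * ψ (exp (t • c)) * exp (t • -a) = ψ 1 := by
  let k : 𝕂 → 𝔸 := fun s => exp (s • a) * ψ (exp (s • c)) * exp (s • -a)
  have hk : ∀ s, HasDerivAt k 0 s := fun s => by
    have hψexp : HasDerivAt (fun u : 𝕂 => ψ (exp (u • c))) (ψ (exp (s • c) * c)) s :=
      ψ.hasFDerivAt.comp_hasDerivAt s (hasDerivAt_exp_smul_const c s)
    refine (((hasDerivAt_exp_smul_const a s).mul hψexp).mul
      (hasDerivAt_exp_smul_const' (-a) s)).congr_deriv ?_
    simp only [Pi.mul_apply, hψ]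
    noncomm_ring
  calc exp (t • a) * ψ (exp (t • c)) * exp (t • -a) = k 0 :=
        is_const_of_deriv_eq_zero (fun s => (hk s).differentiableAt) (fun s => (hk s).deriv) t 0
    _ = ψ 1 := by simp [k]

theorem ContinuousLinearMap.map_exp_smul_of_intertwining {a : 𝔸} {c : 𝔹} (ψ : 𝔹 →L[𝕂] 𝔸)
    (hψ : ∀ X, ψ (X * c) = ψ X * a - a * ψ X) (t : 𝕂) :
    ψ (exp (t • c)) = exp (t • -a) * ψ 1 * exp (t • a) := by
  have hinv : exp (t • -a) * exp (t • a) = 1 := by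
    simpa using exp_smul_mul_exp_smul_neg (-a) t
  rw [← ψ.exp_smul_conj_map_exp_smul hψ t]
  simp only [← mul_assoc, hinv, one_mul]
  rw [mul_assoc, hinv, mul_one]

end ExpConjugation

namespace Matrix

section RowCombination

variable {ι R A : Type*} [Fintype ι] [CommRing R]

def rowCombination [AddCommGroup A] [Module R A] (O : ι → A) (i : ι) :
    Matrix ι ι R →ₗ[R] A where
  toFun X := ∑ j, X i j • O j
  map_add' X Y := by simp only [add_apply, add_smul, Finset.sum_add_distrib]
  map_smul' c X := by
    simp only [smul_apply, smul_eq_mul, mul_smul, Finset.smul_sum, RingHom.id_apply]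

theorem rowCombination_apply [AddCommGroup A] [Module R A] (O : ι → A) (i : ι)
    (X : Matrix ι ι R) : rowCombination O i X = ∑ j, X i j • O j := rfl

theorem rowCombination_one [DecidableEq ι] [AddCommGroup A] [Module R A] (O : ι → A) (i : ι) :
    rowCombination O i (1 : Matrix ι ι R) = O i := by
  simp [rowCombination_apply, one_apply]

theorem rowCombination_mul_of_commutator [Ring A] [Algebra R A] {S : Matrix ι ι R} {a : A}
    {O : ι → A} (hO : ∀ j, a * O j - O j * a = -∑ k, S j k • O k) (i : ι) (X : Matrix ι ι R) :
    rowCombination O i (X * S) = rowCombination O i X * a - a * rowCombination O i X := by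
  calc rowCombination O i (X * S) = ∑ j, X i j • ∑ k, S j k • O k := by
        simp only [rowCombination_apply, mul_apply, Finset.sum_smul, Finset.smul_sum, mul_smul]
        exact Finset.sum_comm
    _ = ∑ j, X i j • (O j * a - a * O j) := by
        refine Finset.sum_congr rfl fun j _ => ?_
        rw [← neg_sub, hO, neg_neg]
    _ = rowCombination O i X * a - a * rowCombination O i X := by
        simp only [rowCombination_apply, Finset.sum_mul, Finset.mul_sum, smul_sub,
          smul_mul_assoc, mul_smul_comm, Finset.sum_sub_distrib]

end RowCombination

variable {n ι 𝕜 : Type*} [Fintype n] [DecidableEq n] [Fintype ι] [DecidableEq ι] [RCLike 𝕜]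

theorem sum_norm_sq_mulVec_of_mem_unitaryGroup {U : Matrix ι ι 𝕜} (hU : U ∈ unitaryGroup ι 𝕜)
    (v : ι → 𝕜) : ∑ i, ‖(U *ᵥ v) i‖ ^ 2 = ∑ i, ‖v i‖ ^ 2 := by
  have sum_norm_sq : ∀ w : ι → 𝕜, ((∑ i, ‖w i‖ ^ 2 : ℝ) : 𝕜) = star w ⬝ᵥ w := fun w => by
    simp [dotProduct, RCLike.conj_mul]
  have hdot : star (U *ᵥ v) ⬝ᵥ (U *ᵥ v) = star v ⬝ᵥ v := by
    rw [star_mulVec, dotProduct_mulVec, vecMul_vecMul, ← star_eq_conjTranspose,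
      Unitary.star_mul_self_of_mem hU, vecMul_one]
  exact_mod_cast (sum_norm_sq _).trans (hdot.trans (sum_norm_sq v).symm)

theorem exp_mem_unitaryGroup_of_mem_skewAdjoint {A : Matrix ι ι 𝕜}
    (hA : A ∈ skewAdjoint (Matrix ι ι 𝕜)) : exp A ∈ unitaryGroup ι 𝕜 := by
  rw [mem_unitaryGroup_iff', star_eq_conjTranspose, ← exp_conjTranspose, ← star_eq_conjTranspose,
    skewAdjoint.mem_iff.mp hA, ← exp_add_of_commute _ _ (Commute.refl A).neg_left,
    neg_add_cancel, exp_zero]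

attribute [local instance] Matrix.linftyOpNormedRing Matrix.linftyOpNormedAlgebra in
theorem exp_smul_conj_eq_sum_of_commutator {H : Matrix n n 𝕜} {S : Matrix ι ι 𝕜}
    {O : ι → Matrix n n 𝕜} (hO : ∀ j, H * O j - O j * H = -∑ k, S j k • O k) (z : 𝕜) (i : ι) :
    exp (z • -H) * O i * exp (z • H) = ∑ j, exp (z • S) i j • O j := by
  have h := (rowCombination O i).toContinuousLinearMap.map_exp_smul_of_intertwining
    (rowCombination_mul_of_commutator hO i) z
  rw [LinearMap.coe_toContinuousLinearMap', rowCombination_one, rowCombination_apply] at h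
  exact h.symm

end Matrix

theorem shadow_state_norm_conserved_general
    {N M : ℕ}
    (H : Matrix (Fin N) (Fin N) ℂ)
    (O : Fin M → Matrix (Fin N) (Fin N) ℂ)
    (h : Fin M → Fin M → ℂ)
    (hinv : ∀ m, H * O m - O m * H = -∑ m', h m m' • O m')
    (HS : Matrix (Fin M) (Fin M) ℂ) (hHS : ∀ m m', HS m m' = h m m')
    (hHerm : HS.IsHermitian)
    (ρ : Matrix (Fin N) (Fin N) ℂ)
    (ρt : ℝ → Matrix (Fin N) (Fin N) ℂ)
    (hρt : ∀ t : ℝ, ρt t =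
      exp ((-(Complex.I * t)) • H) * ρ * exp ((Complex.I * t) • H))
    (v : Fin M → ℝ → ℂ)
    (hv : ∀ m t, v m t = (ρt t * O m).trace) :
    ∀ t : ℝ, ∑ m, ‖v m t‖ ^ 2 = ∑ m, ‖v m 0‖ ^ 2 := by
  intro t
  simp only [← hHS] at hinv
  have hU : exp ((-(Complex.I * t)) • HS) ∈ unitaryGroup (Fin M) ℂ :=
    exp_mem_unitaryGroup_of_mem_skewAdjoint
      (hHerm.isSelfAdjoint.smul_mem_skewAdjoint (by simp [skewAdjoint.mem_iff]))
  have hρ0 : ρt 0 = ρ := by simp [hρt]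
  have hevolve : (fun m => v m t) = exp ((-(Complex.I * t)) • HS) *ᵥ fun m => v m 0 := by
    funext m
    have hheisenberg := exp_smul_conj_eq_sum_of_commutator hinv (-(Complex.I * t)) m
    rw [neg_smul_neg] at hheisenberg
    rw [hv, hρt, mul_assoc, mul_assoc, trace_mul_comm, mul_assoc, hheisenberg]
    simp only [Matrix.mul_sum, Matrix.mul_smul, trace_sum, trace_smul, smul_eq_mul, mulVec,
      dotProduct, hv, hρ0]
  rw [← sum_norm_sq_mulVec_of_mem_unitaryGroup hU (fun m => v m 0), ← hevolve]

/-- If `H_S` is Hermitian, the squared norm of the expectation vector is conserved: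
`∑ m, |v m t|² = ∑ m, |v m 0|²`, so the normalization `A` of the shadow state is
constant in time. -/
theorem shadow_state_norm_conserved
    {N M : ℕ} (hN : 0 < N) (hM : 0 < M)
    (H : Matrix (Fin N) (Fin N) ℂ) (hH : H.IsHermitian)
    (O : Fin M → Matrix (Fin N) (Fin N) ℂ)
    (h : Fin M → Fin M → ℂ)
    (hinv : ∀ m, H * O m - O m * H = -∑ m', h m m' • O m')
    (HS : Matrix (Fin M) (Fin M) ℂ) (hHS : ∀ m m', HS m m' = h m m')
    (hHerm : HS.IsHermitian)
    (ρ : Matrix (Fin N) (Fin N) ℂ)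
    (ρt : ℝ → Matrix (Fin N) (Fin N) ℂ)
    (hρt : ∀ t : ℝ, ρt t =
      exp ((-(Complex.I * t)) • H) * ρ * exp ((Complex.I * t) • H))
    (v : Fin M → ℝ → ℂ)
    (hv : ∀ m t, v m t = (ρt t * O m).trace) :
    ∀ t : ℝ, ∑ m, ‖v m t‖ ^ 2 = ∑ m, ‖v m 0‖ ^ 2 :=
  shadow_state_norm_conserved_general H O h hinv HS hHS hHerm ρ ρt hρt v hv
end

section
/- Let H be a Hermitian N×N complex matrix and O_1,…,O_M be N×N complex matrices satisfying the invariance property [H,O_m] = -∑_{m'=1}^M h_{mm'} O_{m'} for all m. Let ρ be any N×N complex matrix, let O_m(t) := exp(itH) O_m exp(-itH), and define w_{m,m'}(t,t') := trace(ρ · O_m(t) · O_{m'}(t')). Then for every fixed t and every (m,m'), the function t' ↦ w_{m,m'}(t,t') is differentiable with derivative ∂_{t'} w_{m,m'}(t,t') = -i ∑_{k=1}^M h_{m'k} w_{m,k}(t,t'). (Theorem 3.1, second equation: ∂_{t'} |ρ;S(t,t')⟩ = -i (1 ⊗ H_S) |ρ;S(t,t')⟩.) -/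
open Matrix NormedSpace

/-!
`O_{m'}(t')` satisfies the Heisenberg equation `d/dt' O(t') = i [H, O(t')]`, and conjugation by
`exp(it'H)` commutes with `[H, ·]`, so the invariance relation for the `O_m` transfers to the
evolved operators. Differentiating `trace(ρ O_m(t) O_{m'}(t'))`, which is linear in `O_{m'}(t')`,
gives the claim.
-/

section
variable {𝔸 : Type*} [Ring 𝔸] [Algebra ℂ 𝔸] [TopologicalSpace 𝔸] [IsTopologicalRing 𝔸]

noncomputable def heisenberg (H : 𝔸) (t : ℝ) : 𝔸 →ₗ[ℂ] 𝔸 :=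
  LinearMap.mulLeftRight ℂ (exp ((Complex.I * t) • H), exp ((-(Complex.I * t)) • H))

theorem heisenberg_apply (H X : 𝔸) (t : ℝ) :
    heisenberg H t X = exp ((Complex.I * t) • H) * X * exp ((-(Complex.I * t)) • H) :=
  rfl

theorem commutator_heisenberg [T2Space 𝔸] (H X : 𝔸) (t : ℝ) :
    H * heisenberg H t X - heisenberg H t X * H = heisenberg H t (H * X - X * H) := by
  have hl : Commute H (exp ((Complex.I * t) • H)) :=
    ((Commute.refl H).smul_right _).exp_right
  have hr : Commute H (exp ((-(Complex.I * t)) • H)) :=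
    ((Commute.refl H).smul_right _).exp_right
  simp only [heisenberg_apply, mul_sub, sub_mul, ← mul_assoc, hl.eq]
  simp only [mul_assoc, hr.eq]
end

theorem hasDerivAt_heisenberg {𝔸 : Type*} [NormedRing 𝔸] [NormedAlgebra ℂ 𝔸] [CompleteSpace 𝔸]
    (H X : 𝔸) (t : ℝ) :
    HasDerivAt (fun s : ℝ => heisenberg H s X)
      (Complex.I • (H * heisenberg H t X - heisenberg H t X * H)) t := by
  set B := Complex.I • H
  have hconj : HasDerivAt (fun u : ℂ => exp (u • B) * X * exp (u • -B))
      (B * (exp ((t : ℂ) • B) * X * exp ((t : ℂ) • -B))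
        - exp ((t : ℂ) • B) * X * exp ((t : ℂ) • -B) * B) t := by
    refine (((hasDerivAt_exp_smul_const' B (t : ℂ)).mul_const X).mul
      (hasDerivAt_exp_smul_const (-B) (t : ℂ))).congr_deriv ?_
    noncomm_ring
  have hB : ∀ u : ℂ, u • B = (Complex.I * u) • H := fun u => by rw [smul_smul, mul_comm]
  have heq : ∀ s : ℝ, heisenberg H s X = exp ((s : ℂ) • B) * X * exp ((s : ℂ) • -B) := by
    intro s
    rw [heisenberg_apply, smul_neg, hB, neg_smul]
  simpa only [heq, B, smul_sub, smul_mul_assoc, mul_smul_comm, Complex.ofReal_one, one_smul,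
    Function.comp_def] using
    hconj.scomp t (hasDerivAt_id t).ofReal_comp

section
-- Any norm would do: it only fixes the (product) topology in which derivatives are taken.
attribute [local instance] Matrix.linftyOpNormedRing Matrix.linftyOpNormedAlgebra

theorem HasDerivAt.trace_mul_left {n : Type*} [Fintype n] [DecidableEq n] (C : Matrix n n ℂ)
    {f : ℝ → Matrix n n ℂ} {f' : Matrix n n ℂ} {t : ℝ} (hf : HasDerivAt f f' t) :
    HasDerivAt (fun s => (C * f s).trace) (C * f').trace t :=
  (((traceLinearMap n ℂ ℂ ∘ₗ LinearMap.mulLeft ℂ C).toContinuousLinearMap).restrictScalars ℝ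
    ).hasFDerivAt.comp_hasDerivAt t hf

theorem two_time_correlator_derivative_snd_general
    {N M : ℕ}
    (H : Matrix (Fin N) (Fin N) ℂ)
    (O : Fin M → Matrix (Fin N) (Fin N) ℂ)
    (h : Fin M → Fin M → ℂ)
    (hinv : ∀ m, H * O m - O m * H = -∑ m', h m m' • O m')
    (ρ : Matrix (Fin N) (Fin N) ℂ)
    (Ot : Fin M → ℝ → Matrix (Fin N) (Fin N) ℂ)
    (hOt : ∀ m (t : ℝ), Ot m t =
      NormedSpace.exp ((Complex.I * t) • H) * O m * NormedSpace.exp ((-(Complex.I * t)) • H))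
    (w : Fin M → Fin M → ℝ → ℝ → ℂ)
    (hw : ∀ m m' t t', w m m' t t' = (ρ * Ot m t * Ot m' t').trace) :
    ∀ (t t' : ℝ) (m m' : Fin M),
      HasDerivAt (fun s : ℝ => w m m' t s)
        (-Complex.I * ∑ k, h m' k * w m k t t') t' := by
  intro t t' m m'
  have hOt' : ∀ k s, Ot k s = heisenberg H s (O k) := hOt
  have hcomm : H * Ot m' t' - Ot m' t' * H = -∑ k, h m' k • Ot k t' := by
    simp only [hOt', commutator_heisenberg, hinv, map_neg, map_sum, map_smul]
  have hderiv : HasDerivAt (fun s => w m m' t s)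
      (ρ * Ot m t * (Complex.I • (H * Ot m' t' - Ot m' t' * H))).trace t' := by
    have hfun : (fun s => w m m' t s) = fun s => (ρ * Ot m t * heisenberg H s (O m')).trace :=
      funext fun s => by rw [hw, hOt' m' s]
    rw [hfun, hOt' m' t']
    exact (hasDerivAt_heisenberg H (O m') t').trace_mul_left (ρ * Ot m t)
  refine hderiv.congr_deriv ?_
  simp only [hcomm, hw, Matrix.mul_smul, trace_smul, trace_neg,
    trace_sum, smul_eq_mul, Finset.mul_sum, neg_mul, mul_neg, Finset.sum_neg_distrib]

/-- **Theorem 3.1, second equation.** The two-time correlator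
`w m m' t t' = trace(ρ · O_m(t) · O_{m'}(t'))`, with `O_m(t)` the Heisenberg evolution,
satisfies `∂_{t'} w m m' t t' = -i ∑ k, h m' k * w m k t t'`. -/
theorem two_time_correlator_derivative_snd
    {N M : ℕ} (hN : 0 < N) (hM : 0 < M)
    (H : Matrix (Fin N) (Fin N) ℂ) (hH : H.IsHermitian)
    (O : Fin M → Matrix (Fin N) (Fin N) ℂ)
    (h : Fin M → Fin M → ℂ)
    (hinv : ∀ m, H * O m - O m * H = -∑ m', h m m' • O m')
    (ρ : Matrix (Fin N) (Fin N) ℂ)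
    (Ot : Fin M → ℝ → Matrix (Fin N) (Fin N) ℂ)
    (hOt : ∀ m (t : ℝ), Ot m t =
      NormedSpace.exp ((Complex.I * t) • H) * O m * NormedSpace.exp ((-(Complex.I * t)) • H))
    (w : Fin M → Fin M → ℝ → ℝ → ℂ)
    (hw : ∀ m m' t t', w m m' t t' = (ρ * Ot m t * Ot m' t').trace) :
    ∀ (t t' : ℝ) (m m' : Fin M),
      HasDerivAt (fun s : ℝ => w m m' t s)
        (-Complex.I * ∑ k, h m' k * w m k t t') t' :=
  two_time_correlator_derivative_snd_general H O h hinv ρ Ot hOt w hw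

end
end

section
/- Let H₁ and H₂ be Hermitian N×N complex matrices, let O^{(1)}_1,…,O^{(1)}_{M₁} be N×N complex matrices satisfying [H₁, O^{(1)}_m] = -∑_{k=1}^{M₁} h^{(1)}_{mk} O^{(1)}_k for all m, and let O^{(2)}_1,…,O^{(2)}_{M₂} be N×N complex matrices satisfying [H₂, O^{(2)}_{m'}] = -∑_{k=1}^{M₂} h^{(2)}_{m'k} O^{(2)}_k for all m'. Let ρ be any N×N complex matrix and define w_{m,m'}(t₁,t₂) := trace(ρ · exp(it₁H₁) O^{(1)}_m exp(-it₁H₁) · exp(it₂H₂) O^{(2)}_{m'} exp(-it₂H₂)). Then for every fixed t₂ and every (m,m'), the function t₁ ↦ w_{m,m'}(t₁,t₂) is differentiable with derivative ∂_{t₁} w_{m,m'}(t₁,t₂) = -i ∑_{k=1}^{M₁} h^{(1)}_{mk} w_{k,m'}(t₁,t₂). (Generalization of Theorem 3.1 to operators evolving under distinct Hamiltonians.) -/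
open Matrix NormedSpace

/-!
Conjugation by `exp (i t H)` turns differentiation in `t` into the commutator with `H`:
`d/dt (e^{itH} O e^{-itH}) = i e^{itH} [H, O] e^{-itH}`. The invariance property writes `[H₁, O₁ m]`
in the span of the `O₁ k`, and `A ↦ tr (ρ A B)` is linear, so the derivative of `w m m'` is the same
combination of the `w k m'`.
-/

attribute [local instance] Matrix.linftyOpNormedRing Matrix.linftyOpNormedAlgebra

section HeisenbergPicture

variable {𝔸 : Type*} [NormedRing 𝔸] [NormedAlgebra ℂ 𝔸]

noncomputable def heisenbergEvolution (H O : 𝔸) (t : ℝ) : 𝔸 :=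
  exp ((Complex.I * t) • H) * O * exp ((-(Complex.I * t)) • H)

theorem hasDerivAt_exp_mul_ofReal_smul [CompleteSpace 𝔸] (c : ℂ) (H : 𝔸) (t : ℝ) :
    HasDerivAt (fun s : ℝ => exp ((c * s) • H)) (c • (H * exp ((c * t) • H))) t := by
  have hexp : HasDerivAt (fun u : ℂ => exp (u • c • H)) (c • H * exp ((t : ℂ) • c • H)) t :=
    hasDerivAt_exp_smul_const' _ _
  have hcomp := hexp.scomp (𝕜 := ℝ) t (Complex.ofRealCLM.hasDerivAt (x := t))
  simp only [Function.comp_def, Complex.ofRealCLM_apply, smul_smul, mul_comm _ c,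
    Complex.ofReal_one, mul_one, smul_mul_assoc] at hcomp
  exact hcomp

theorem hasDerivAt_heisenbergEvolution [CompleteSpace 𝔸] (H O : 𝔸) (t : ℝ) :
    HasDerivAt (heisenbergEvolution H O)
      (Complex.I • heisenbergEvolution H (H * O - O * H) t) t := by
  have hE := hasDerivAt_exp_mul_ofReal_smul Complex.I H t
  have hE' := hasDerivAt_exp_mul_ofReal_smul (-Complex.I) H t
  simp only [neg_mul] at hE'
  rw [((Commute.refl H).smul_right _).exp_right.eq] at hE
  refine ((hE.mul_const O).mul hE').congr_deriv ?_
  simp only [heisenbergEvolution, smul_mul_assoc, mul_smul_comm, neg_smul, mul_neg, mul_sub,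
    sub_mul, smul_sub, mul_assoc]
  abel

theorem heisenbergEvolution_sum_smul {ι : Type*} (s : Finset ι) (H : 𝔸) (a : ι → ℂ)
    (O : ι → 𝔸) (t : ℝ) :
    heisenbergEvolution H (∑ k ∈ s, a k • O k) t
      = ∑ k ∈ s, a k • heisenbergEvolution H (O k) t := by
  simp only [heisenbergEvolution, Finset.mul_sum, Finset.sum_mul, mul_smul_comm, smul_mul_assoc]

theorem hasDerivAt_heisenbergEvolution_of_commutator_eq [CompleteSpace 𝔸] {ι : Type*} [Fintype ι]
    {H : 𝔸} {O : ι → 𝔸} {h : ι → ι → ℂ} (hinv : ∀ m, H * O m - O m * H = -∑ k, h m k • O k)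
    (m : ι) (t : ℝ) :
    HasDerivAt (heisenbergEvolution H (O m))
      (-Complex.I • ∑ k, h m k • heisenbergEvolution H (O k) t) t := by
  have hneg : heisenbergEvolution H (-∑ k, h m k • O k) t
      = -heisenbergEvolution H (∑ k, h m k • O k) t := by
    simp only [heisenbergEvolution, mul_neg, neg_mul]
  convert hasDerivAt_heisenbergEvolution H (O m) t using 1
  rw [hinv, hneg, heisenbergEvolution_sum_smul, smul_neg, neg_smul]

end HeisenbergPicture

theorem HasDerivAt.trace_mul_mul {n : Type*} [Fintype n] [DecidableEq n]
    {f : ℝ → Matrix n n ℂ} {f' : Matrix n n ℂ} {t : ℝ} (hf : HasDerivAt f f' t)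
    (ρ B : Matrix n n ℂ) :
    HasDerivAt (fun s => (ρ * f s * B).trace) (ρ * f' * B).trace t :=
  ((traceLinearMap n ℂ ℂ).toContinuousLinearMap.restrictScalars ℝ).hasFDerivAt.comp_hasDerivAt t
    ((hf.const_mul ρ).mul_const B)

theorem two_time_correlator_distinct_hamiltonians_general
    {N M₁ M₂ : ℕ}
    (H₁ H₂ : Matrix (Fin N) (Fin N) ℂ)
    (O₁ : Fin M₁ → Matrix (Fin N) (Fin N) ℂ)
    (O₂ : Fin M₂ → Matrix (Fin N) (Fin N) ℂ)
    (h₁ : Fin M₁ → Fin M₁ → ℂ)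
    (hinv₁ : ∀ m, H₁ * O₁ m - O₁ m * H₁ = -∑ k, h₁ m k • O₁ k)
    (ρ : Matrix (Fin N) (Fin N) ℂ)
    (w : Fin M₁ → Fin M₂ → ℝ → ℝ → ℂ)
    (hw : ∀ m m' t₁ t₂, w m m' t₁ t₂ =
      (ρ * (exp ((Complex.I * t₁) • H₁) * O₁ m * exp ((-(Complex.I * t₁)) • H₁))
         * (exp ((Complex.I * t₂) • H₂) * O₂ m' * exp ((-(Complex.I * t₂)) • H₂))).trace) :
    ∀ (t₁ t₂ : ℝ) (m : Fin M₁) (m' : Fin M₂),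
      HasDerivAt (fun s : ℝ => w m m' s t₂)
        (-Complex.I * ∑ k, h₁ m k * w k m' t₁ t₂) t₁ := by
  intro t₁ t₂ m m'
  have hw_heisenberg : ∀ k s, w k m' s t₂
      = (ρ * heisenbergEvolution H₁ (O₁ k) s * heisenbergEvolution H₂ (O₂ m') t₂).trace :=
    fun k s => hw k m' s t₂
  simp only [hw_heisenberg]
  convert (hasDerivAt_heisenbergEvolution_of_commutator_eq hinv₁ m t₁).trace_mul_mul ρ
    (heisenbergEvolution H₂ (O₂ m') t₂) using 1
  simp only [Matrix.mul_smul, Matrix.smul_mul, Matrix.sum_mul, trace_smul,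
    trace_sum, smul_eq_mul, Finset.mul_sum]

/-- Generalization of Theorem 3.1 to products of operators evolving under distinct
Hamiltonians: `∂_{t₁} w m m' t₁ t₂ = -i ∑ k, h₁ m k * w k m' t₁ t₂`. -/
theorem two_time_correlator_distinct_hamiltonians
    {N M₁ M₂ : ℕ} (hN : 0 < N) (hM₁ : 0 < M₁) (hM₂ : 0 < M₂)
    (H₁ H₂ : Matrix (Fin N) (Fin N) ℂ) (hH₁ : H₁.IsHermitian) (hH₂ : H₂.IsHermitian)
    (O₁ : Fin M₁ → Matrix (Fin N) (Fin N) ℂ)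
    (O₂ : Fin M₂ → Matrix (Fin N) (Fin N) ℂ)
    (h₁ : Fin M₁ → Fin M₁ → ℂ) (h₂ : Fin M₂ → Fin M₂ → ℂ)
    (hinv₁ : ∀ m, H₁ * O₁ m - O₁ m * H₁ = -∑ k, h₁ m k • O₁ k)
    (hinv₂ : ∀ m', H₂ * O₂ m' - O₂ m' * H₂ = -∑ k, h₂ m' k • O₂ k)
    (ρ : Matrix (Fin N) (Fin N) ℂ)
    (w : Fin M₁ → Fin M₂ → ℝ → ℝ → ℂ)
    (hw : ∀ m m' t₁ t₂, w m m' t₁ t₂ =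
      (ρ * (exp ((Complex.I * t₁) • H₁) * O₁ m * exp ((-(Complex.I * t₁)) • H₁))
         * (exp ((Complex.I * t₂) • H₂) * O₂ m' * exp ((-(Complex.I * t₂)) • H₂))).trace) :
    ∀ (t₁ t₂ : ℝ) (m : Fin M₁) (m' : Fin M₂),
      HasDerivAt (fun s : ℝ => w m m' s t₂)
        (-Complex.I * ∑ k, h₁ m k * w k m' t₁ t₂) t₁ :=
  two_time_correlator_distinct_hamiltonians_general H₁ H₂ O₁ O₂ h₁ hinv₁ ρ w hw
end

section
/- Let H be a Hermitian N×N complex matrix and O_1,…,O_M be N×N complex matrices satisfying the invariance property [H,O_m] = -∑_{m'=1}^M h_{mm'} O_{m'} for all m, with H_S the M×M matrix of entries h_{mm'}. Then the Heisenberg evolution of each operator is a linear combination of the operators in the set whose coefficients are given by the matrix exponential of -it H_S: for all t ∈ ℝ and all m, exp(itH) O_m exp(-itH) = ∑_{m'=1}^M (exp(-it H_S))_{mm'} O_{m'}. -/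
/-!
Stack the operators into the block matrix `Ω` with `Ω i j = O i`, and put `D = diag(H, …, H)` and
`K = H_S ⊗ 1`. The invariance property says exactly that `Ω D = (D + K) Ω`, and `D` commutes
with `K`. Exponentiating the intertwining relation gives `Ω exp(-D) = exp(-D) exp(-K) Ω`, that is
`exp(D) Ω exp(-D) = exp(-K) Ω`, whose diagonal entries are the claimed identities; the time
dependence enters only by scaling `H` and `H_S` by `it`.
-/

open Matrix NormedSpace

theorem exp_mul_mul_exp_neg_of_semiconjBy {𝔸 : Type*} [NormedRing 𝔸] [NormedAlgebra ℚ 𝔸]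
    [CompleteSpace 𝔸] {d k ω : 𝔸} (hdk : Commute d k) (h : SemiconjBy ω d (d + k)) :
    exp d * ω * exp (-d) = exp (-k) * ω :=
  calc exp d * ω * exp (-d) = exp d * exp (-d) * exp (-k) * ω := by
        rw [mul_assoc, h.neg_right.exp_right.eq, neg_add,
          exp_add_of_commute hdk.neg_left.neg_right, mul_assoc, mul_assoc, mul_assoc]
    _ = exp (-k) * ω := by
        rw [← exp_add_of_commute (Commute.refl d).neg_right, add_neg_cancel, exp_zero, one_mul]

namespace Matrix

variable {m 𝔸 : Type*} [Fintype m] [DecidableEq m]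

theorem semiconjBy_diagonal_add_of_commutator_eq [Ring 𝔸] {H : 𝔸} {O : m → 𝔸}
    {K : Matrix m m 𝔸} (hHO : ∀ i, H * O i - O i * H = -∑ j, K i j * O j) :
    SemiconjBy (of fun i (_ : m) => O i) (diagonal fun _ => H) (diagonal (fun _ => H) + K) := by
  rw [SemiconjBy, add_mul]
  ext i j
  rw [mul_diagonal, Matrix.add_apply, diagonal_mul, mul_apply]
  simp only [of_apply]
  rw [← sub_eq_iff_eq_add', ← neg_sub, hHO i, neg_neg]

variable [NormedRing 𝔸] [NormedAlgebra ℚ 𝔸] [CompleteSpace 𝔸]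

/- Instance search does not find `CompleteSpace (Matrix m m 𝔸)` for the operator norm, whose
uniformity is the product one only after unfolding, so the two proofs below supply it by hand. -/
open scoped Norms.Operator in
theorem exp_mul_mul_exp_neg_of_semiconjBy {D K Ω : Matrix m m 𝔸} (hDK : Commute D K)
    (h : SemiconjBy Ω D (D + K)) : exp D * Ω * exp (-D) = exp (-K) * Ω := by
  refine @_root_.exp_mul_mul_exp_neg_of_semiconjBy _ _ _ ?_ _ _ _ hDK h
  exact (inferInstance : CompleteSpace (m → m → 𝔸))

open scoped Norms.Operator in
theorem exp_map {𝔹 : Type*} [NormedRing 𝔹] [Algebra ℚ 𝔹] (f : 𝔸 →+* 𝔹) (hf : Continuous f)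
    (A : Matrix m m 𝔸) : exp (A.map f) = (exp A).map f := by
  refine (@map_exp _ _ _ _ ?_ _ _ _ _ _ f.mapMatrix (continuous_id.matrix_map hf) A).symm
  exact (inferInstance : CompleteSpace (m → m → 𝔸))

end Matrix

section HeisenbergEvolution

variable {m 𝔸 : Type*} [Fintype m] [DecidableEq m] [NormedRing 𝔸] [NormedAlgebra ℚ 𝔸]
  [CompleteSpace 𝔸]

theorem exp_mul_mul_exp_neg_eq_sum {H : 𝔸} {O : m → 𝔸} {K : Matrix m m 𝔸}
    (hHK : ∀ i j, Commute H (K i j)) (hHO : ∀ i, H * O i - O i * H = -∑ j, K i j * O j) (i : m) :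
    exp H * O i * exp (-H) = ∑ j, exp (-K) i j * O j := by
  have hDK : Commute (diagonal fun _ : m => H) K := by
    rw [Commute, SemiconjBy]
    ext i j
    simp [diagonal_mul, mul_diagonal, (hHK i j).eq]
  have hΩ := congr_fun₂ (exp_mul_mul_exp_neg_of_semiconjBy hDK
    (semiconjBy_diagonal_add_of_commutator_eq hHO)) i i
  rw [diagonal_neg, exp_diagonal, exp_diagonal, mul_diagonal, diagonal_mul, mul_apply] at hΩ
  simpa only [Pi.exp_def, of_apply] using hΩ

theorem exp_mul_mul_exp_neg_eq_sum_smul {𝕂 : Type*} [NormedField 𝕂] [NormedAlgebra ℚ 𝕂]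
    [CompleteSpace 𝕂] [NormedAlgebra 𝕂 𝔸] {H : 𝔸} {O : m → 𝔸} {h : Matrix m m 𝕂}
    (hHO : ∀ i, H * O i - O i * H = -∑ j, h i j • O j) (i : m) :
    exp H * O i * exp (-H) = ∑ j, exp (-h) i j • O j := by
  have hHK (i j : m) : Commute H (h.map (algebraMap 𝕂 𝔸) i j) := (Algebra.commutes _ _).symm
  rw [exp_mul_mul_exp_neg_eq_sum hHK (by simpa [Algebra.smul_def] using hHO),
    ← Matrix.map_neg _ (map_neg _), Matrix.exp_map _ (continuous_algebraMap 𝕂 𝔸)]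
  simp [Algebra.smul_def]

end HeisenbergEvolution

theorem heisenberg_evolution_shadow_general
    {N M : ℕ}
    (H : Matrix (Fin N) (Fin N) ℂ)
    (O : Fin M → Matrix (Fin N) (Fin N) ℂ)
    (h : Fin M → Fin M → ℂ)
    (hinv : ∀ m, H * O m - O m * H = -∑ m', h m m' • O m')
    (HS : Matrix (Fin M) (Fin M) ℂ) (hHS : ∀ m m', HS m m' = h m m') :
    ∀ (t : ℝ) (m : Fin M),
      exp ((Complex.I * t) • H) * O m * exp ((-(Complex.I * t)) • H) =
        ∑ m', (exp ((-(Complex.I * t)) • HS)) m m' • O m' := by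
  intro t m
  have hscaled (i : Fin M) : (Complex.I * t) • H * O i - O i * ((Complex.I * t) • H) =
      -∑ j, ((Complex.I * t) • HS) i j • O j := by
    simp only [smul_mul_assoc, mul_smul_comm, ← smul_sub, hinv, Matrix.smul_apply, hHS,
      smul_eq_mul, mul_smul, smul_neg, Finset.smul_sum]
  open scoped Norms.Operator in
  have := FiniteDimensional.complete ℂ (Matrix (Fin N) (Fin N) ℂ)
  open scoped Norms.Operator in
  have := exp_mul_mul_exp_neg_eq_sum_smul hscaled m
  rwa [neg_smul, neg_smul]

/-- The Heisenberg evolution of each operator in the set is the linear combination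
with coefficients given by the matrix exponential of the shadow Hamiltonian:
`exp(itH) O_m exp(-itH) = ∑ m', (exp (-it H_S)) m m' • O m'`. -/
theorem heisenberg_evolution_shadow
    {N M : ℕ} (hN : 0 < N) (hM : 0 < M)
    (H : Matrix (Fin N) (Fin N) ℂ) (hH : H.IsHermitian)
    (O : Fin M → Matrix (Fin N) (Fin N) ℂ)
    (h : Fin M → Fin M → ℂ)
    (hinv : ∀ m, H * O m - O m * H = -∑ m', h m m' • O m')
    (HS : Matrix (Fin M) (Fin M) ℂ) (hHS : ∀ m m', HS m m' = h m m') :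
    ∀ (t : ℝ) (m : Fin M),
      exp ((Complex.I * t) • H) * O m * exp ((-(Complex.I * t)) • H) =
        ∑ m', (exp ((-(Complex.I * t)) • HS)) m m' • O m' :=
  heisenberg_evolution_shadow_general H O h hinv HS hHS
end
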